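/- The term rewriting system R obtained by orienting the equations x+e=x, e+x=x, (x+y)+z=x+(y+z), (x+y)·z=y·(x·z), (d·x)·y=x·(y+x), e·x=x, d·e=e left-to-right is confluent: if t rewrites in zero or more steps to both u and v, then u and v rewrite in zero or more steps to a common term. -/

import Mathlib

/-- Ground terms over constants d, e with binary operations + (add) and · (app). -/
inductive Tm : Type
  | d : Tm
  | e : Tm
  | add : Tm → Tm → Tm
  | app : Tm → Tm → Tm
  deriving DecidableEq

open Tm

/-- Root rewrite steps: instances of the oriented rules. -/
inductive Root : Tm → Tm → Prop
  | addE (x) : Root (add x e) x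
  | eAdd (x) : Root (add e x) x
  | assoc (x y z) : Root (add (add x y) z) (add x (add y z))
  | appAdd (x y z) : Root (app (add x y) z) (app y (app x z))
  | appD (x y) : Root (app (app d x) y) (app x (add y x))
  | appE (x) : Root (app e x) x
  | dE : Root (app d e) e

/-- One rewrite step: a root step applied at some subterm position. -/
inductive Step : Tm → Tm → Prop
  | root {t u} : Root t u → Step t u
  | addL {t t' u} : Step t t' → Step (add t u) (add t' u)
  | addR {t u u'} : Step u u' → Step (add t u) (add t u')
  | appL {t t' u} : Step t t' → Step (app t u) (app t' u)
  | appR {t u u'} : Step u u' → Step (app t u) (app t u')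

/-- Zero or more rewrite steps. -/
def Steps : Tm → Tm → Prop := Relation.ReflTransGen Step

/-- A normal form is a term to which no rule applies. -/
def NormalForm (t : Tm) : Prop := ∀ u, ¬ Step t u

/-- Provable equality in the equational theory (reflexive symmetric transitive
congruence closure of the rule instances). -/
def TermEq : Tm → Tm → Prop := Relation.EqvGen Step

/-!
Every term has a reduct `nf t`, computed bottom-up with the normalizing constructors `addNF` and
`appNF`, and every rule instance preserves `nf`: the `appAdd` and `assoc` rules are the recursion
equations of `appNF` and `addNF`, and `addE` holds because `e` is a right unit of `addNF` on
normal forms. Hence any two reducts of `t` meet in `nf t`.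
-/

namespace Relation

theorem join_reflTransGen_of_invariant_reduct {α : Type*} {r : α → α → Prop} (f : α → α)
    (hf : ∀ a b, r a b → f a = f b) (hred : ∀ a, ReflTransGen r a (f a)) {a b c : α}
    (hab : ReflTransGen r a b) (hac : ReflTransGen r a c) : Join (ReflTransGen r) b c := by
  have hinv : ∀ {x y}, ReflTransGen r x y → f x = f y := fun h ↦ by
    induction h with
    | refl => rfl
    | tail _ hyz ih => exact ih.trans (hf _ _ hyz)
  exact ⟨f a, hinv hab ▸ hred b, hinv hac ▸ hred c⟩

end Relation

open Relation

namespace Steps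

theorem single {t u : Tm} (h : Step t u) : Steps t u := ReflTransGen.single h

theorem trans {t u v : Tm} (h : Steps t u) (h' : Steps u v) : Steps t v :=
  ReflTransGen.trans h h'

theorem add_left {t t' : Tm} (u : Tm) (h : Steps t t') : Steps (add t u) (add t' u) :=
  ReflTransGen.lift (add · u) (fun _ _ ↦ Step.addL) _ _ h

theorem add_right (t : Tm) {u u' : Tm} (h : Steps u u') : Steps (add t u) (add t u') :=
  ReflTransGen.lift (add t) (fun _ _ ↦ Step.addR) _ _ h

theorem app_left {t t' : Tm} (u : Tm) (h : Steps t t') : Steps (app t u) (app t' u) :=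
  ReflTransGen.lift (app · u) (fun _ _ ↦ Step.appL) _ _ h

theorem app_right (t : Tm) {u u' : Tm} (h : Steps u u') : Steps (app t u) (app t u') :=
  ReflTransGen.lift (app t) (fun _ _ ↦ Step.appR) _ _ h

end Steps

namespace Tm

/-! `addNF a b` and `appNF a b` are the normal forms of `a + b` and `a · b` when `a` and `b` are in
normal form. -/

def addNF : Tm → Tm → Tm
  | e, b => b
  | add x y, b => addNF x (addNF y b)
  | a, b => if b = e then a else add a b

def appNF : Tm → Tm → Tm
  | e, b => b
  | d, b => if b = e then e else app d b
  | add x y, b => appNF y (appNF x b)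
  | app d u, b => appNF u (addNF b u)
  | a, b => app a b

def nf : Tm → Tm
  | d => d
  | e => e
  | add a b => addNF (nf a) (nf b)
  | app a b => appNF (nf a) (nf b)

/-- The sums are nested to the right and have no summand `e`: this is what makes `e` a right unit
of `addNF`. -/
def AddNormal : Tm → Prop
  | add x y => AddNormal x ∧ AddNormal y ∧ x ≠ e ∧ (∀ p q, x ≠ add p q) ∧ y ≠ e
  | app x y => AddNormal x ∧ AddNormal y
  | _ => True

theorem steps_addNF : ∀ a b : Tm, Steps (add a b) (addNF a b)
  | e, b => .single (.root (.eAdd b))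
  | add x y, b =>
      (Steps.single (.root (.assoc x y b))).trans
        (((steps_addNF y b).add_right x).trans (steps_addNF x (addNF y b)))
  | d, b | app _ _, b => by
      by_cases hb : b = e
      · subst hb; exact .single (.root (.addE _))
      · simp only [addNF, hb, ↓reduceIte]; exact .refl

theorem steps_appNF : ∀ a b : Tm, Steps (app a b) (appNF a b)
  | e, b => .single (.root (.appE b))
  | d, b => by
      by_cases hb : b = e
      · subst hb; exact .single (.root .dE)
      · simp only [appNF, hb, ↓reduceIte]; exact .refl
  | add x y, b =>
      (Steps.single (.root (.appAdd x y b))).trans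
        (((steps_appNF x b).app_right y).trans (steps_appNF y (appNF x b)))
  | app d u, b =>
      (Steps.single (.root (.appD u b))).trans
        (((steps_addNF b u).app_right u).trans (steps_appNF u (addNF b u)))
  | app e _, _ | app (add _ _) _, _ | app (app _ _) _, _ => .refl

theorem steps_nf : ∀ t : Tm, Steps t (nf t)
  | d | e => .refl
  | add a b =>
      (((steps_nf a).add_left b).trans ((steps_nf b).add_right (nf a))).trans
        (steps_addNF (nf a) (nf b))
  | app a b =>
      (((steps_nf a).app_left b).trans ((steps_nf b).app_right (nf a))).trans
        (steps_appNF (nf a) (nf b))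

theorem addNF_e_of_addNormal : ∀ {a : Tm}, AddNormal a → addNF a e = a
  | d, _ | e, _ | app _ _, _ => rfl
  | add x y, ⟨_, hy, hxe, hxadd, hye⟩ => by
      rw [addNF, addNF_e_of_addNormal hy]
      cases x with
      | e => exact absurd rfl hxe
      | add p q => exact absurd rfl (hxadd p q)
      | d | app _ _ => simp [addNF, hye]

theorem AddNormal.addNF : ∀ {a b : Tm}, AddNormal a → AddNormal b → AddNormal (addNF a b)
  | e, _, _, hb => hb
  | add _ _, _, ⟨hx, hy, _⟩, hb => hx.addNF (hy.addNF hb)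
  | d, b, ha, hb | app _ _, b, ha, hb => by
      by_cases hbe : b = e
      · simpa [Tm.addNF, hbe] using ha
      · simp only [Tm.addNF, hbe, ↓reduceIte]
        exact ⟨ha, hb, by simp, by simp, hbe⟩

theorem AddNormal.appNF : ∀ {a b : Tm}, AddNormal a → AddNormal b → AddNormal (appNF a b)
  | e, _, _, hb => hb
  | d, b, _, hb => by
      by_cases hbe : b = e
      · simp [Tm.appNF, hbe, AddNormal]
      · simpa [Tm.appNF, AddNormal, hbe] using hb
  | add _ _, _, ⟨hx, hy, _⟩, hb => hy.appNF (hx.appNF hb)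
  | app d _, _, ⟨_, hu⟩, hb => hu.appNF (hb.addNF hu)
  | app e _, _, ha, hb | app (add _ _) _, _, ha, hb | app (app _ _) _, _, ha, hb =>
      ⟨ha, hb⟩

theorem addNormal_nf : ∀ t : Tm, AddNormal (nf t)
  | d | e => trivial
  | add a b => (addNormal_nf a).addNF (addNormal_nf b)
  | app a b => (addNormal_nf a).appNF (addNormal_nf b)

theorem addNF_assoc : ∀ a b c : Tm, addNF (addNF a b) c = addNF a (addNF b c)
  | e, _, _ => rfl
  | add x y, b, c => by simp only [addNF, addNF_assoc]
  | d, b, c | app _ _, b, c => by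
      by_cases hb : b = e
      · subst hb; simp only [addNF, ↓reduceIte]; rfl
      · simp [addNF, hb]

theorem appNF_addNF : ∀ a b c : Tm, appNF (addNF a b) c = appNF b (appNF a c)
  | e, _, _ => rfl
  | add x y, b, c => by simp only [addNF, appNF, appNF_addNF]
  | d, b, c | app _ _, b, c => by
      by_cases hb : b = e
      · subst hb; simp [addNF, appNF]
      · simp [addNF, appNF, hb]

theorem nf_eq_of_root {t u : Tm} : Root t u → nf t = nf u
  | .addE x => addNF_e_of_addNormal (addNormal_nf x)
  | .eAdd _ | .appE _ | .dE => rfl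
  | .assoc x y z => addNF_assoc (nf x) (nf y) (nf z)
  | .appAdd x y z => appNF_addNF (nf x) (nf y) (nf z)
  | .appD x y => by
      simp only [nf]
      by_cases hx : nf x = e
      · simp [hx, appNF, addNF_e_of_addNormal (addNormal_nf y)]
      · rw [show appNF d (nf x) = app d (nf x) by simp [appNF, hx]]
        rfl

theorem nf_eq_of_step {t u : Tm} (h : Step t u) : nf t = nf u := by
  induction h with
  | root h => exact nf_eq_of_root h
  | addL _ ih | addR _ ih | appL _ ih | appR _ ih => simp only [nf, ih]

end Tm

theorem R_confluent :
    ∀ t u v : Tm, Steps t u → Steps t v → ∃ w : Tm, Steps u w ∧ Steps v w :=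
  fun _ _ _ ↦ join_reflTransGen_of_invariant_reduct Tm.nf (fun _ _ ↦ Tm.nf_eq_of_step) Tm.steps_nf
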